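/- In the queueing Groves mechanism with preferences restricted to the domains of all orderings, all strict orderings, or all non-strict orderings on A_i × Z, the mechanism suffers from Brexit Anomaly, as a consequence of the characterization: since the structural condition (same outcome under two own-actions at one opponent profile implies same outcome at all opponent profiles) fails for the Groves mechanism, and any mechanism for which this condition fails exhibits BA on a sufficiently rich domain. -/
import Mathlib


open unitInterval

/-- A complete, transitive, reflexive preference ordering on `α`. -/
structure Pref (α : Type*) where
  rel : α → α → Prop
  total : ∀ x y, rel x y ∨ rel y x
  trans : ∀ x y z, rel x y → rel y z → rel x z
  refl : ∀ x, rel x x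

/-- Strict preference derived from a preference ordering. -/
def StrictPref {α : Type*} (P : Pref α) (x y : α) : Prop := P.rel x y ∧ ¬ P.rel y x

/-- The Groves mechanism for the two-patient queueing problem: given reports
`(x1, x2) ∈ [0,1]²` it returns `(w1, t1, w2, t2)`: if `x1 > x2` then `(0, x2, 1, 0)`,
otherwise `(1, 0, 0, x1)`. -/
noncomputable def groves (x1 x2 : unitInterval) : ℝ × ℝ × ℝ × ℝ :=
  if (x2 : ℝ) < (x1 : ℝ) then (0, (x2 : ℝ), 1, 0) else (1, 0, 0, (x1 : ℝ))

/-- The Groves mechanism as a mechanism on profiles of reports of the two patients. -/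
noncomputable def grovesMech (x : Fin 2 → unitInterval) : ℝ × ℝ × ℝ × ℝ :=
  groves (x 0) (x 1)

/-- Brexit Anomaly for the queueing mechanism, relative to a common admissible domain `D`
of preference orderings on action-outcome pairs. -/
def QueueBA (D : Set (Pref (unitInterval × (ℝ × ℝ × ℝ × ℝ)))) : Prop :=
  ∃ (i : Fin 2) (r ℓ : unitInterval) (a b : Fin 2 → unitInterval)
    (P : Pref (unitInterval × (ℝ × ℝ × ℝ × ℝ))),
    P ∈ D ∧ r ≠ ℓ ∧ (∃ j, j ≠ i ∧ a j ≠ b j) ∧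
    grovesMech (Function.update a i r) = grovesMech (Function.update a i ℓ) ∧
    StrictPref P (ℓ, grovesMech (Function.update a i ℓ))
      (r, grovesMech (Function.update a i r)) ∧
    ∀ x : unitInterval,
      P.rel (r, grovesMech (Function.update b i r)) (x, grovesMech (Function.update b i x))

/-! ### Auxiliary definitions -/

abbrev QT := unitInterval × (ℝ × ℝ × ℝ × ℝ)

/-- Utility with full ties: `w1 + t2 - x`. -/
noncomputable def u1 (p : QT) : ℝ := p.2.1 + p.2.2.2.2 - (p.1 : ℝ)

/-- Utility for the strict preference: `w1 + t2 - x/2`. -/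
noncomputable def u2 (p : QT) : ℝ := p.2.1 + p.2.2.2.2 - (p.1 : ℝ) / 2

noncomputable def P1 : Pref QT where
  rel p q := u1 q ≤ u1 p
  total p q := le_total _ _
  trans p q r h1 h2 := le_trans h2 h1
  refl p := le_refl _

/-- Injective lexicographic key. -/
def qkey (p : QT) : unitInterval ×ₗ (ℝ ×ₗ (ℝ ×ₗ (ℝ ×ₗ ℝ))) :=
  toLex (p.1, toLex (p.2.1, toLex (p.2.2.1, toLex (p.2.2.2.1, p.2.2.2.2))))

lemma qkey_inj : Function.Injective qkey := by
  intro p q h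
  unfold qkey at h
  have h' := toLex.injective h
  obtain ⟨h1, h2⟩ := Prod.mk.injEq .. ▸ h'
  have h2' := toLex.injective h2
  obtain ⟨h3, h4⟩ := Prod.mk.injEq .. ▸ h2'
  have h4' := toLex.injective h4
  obtain ⟨h5, h6⟩ := Prod.mk.injEq .. ▸ h4'
  have h6' := toLex.injective h6
  obtain ⟨h7, h8⟩ := Prod.mk.injEq .. ▸ h6'
  exact Prod.ext h1 (Prod.ext h3 (Prod.ext h5 (Prod.ext h7 h8)))

noncomputable def P2 : Pref QT where
  rel p q := u2 q < u2 p ∨ (u2 p = u2 q ∧ qkey p ≤ qkey q)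
  total p q := by
    rcases lt_trichotomy (u2 p) (u2 q) with h | h | h
    · exact Or.inr (Or.inl h)
    · rcases le_total (qkey p) (qkey q) with hk | hk
      · exact Or.inl (Or.inr ⟨h, hk⟩)
      · exact Or.inr (Or.inr ⟨h.symm, hk⟩)
    · exact Or.inl (Or.inl h)
  trans p q r h1 h2 := by
    rcases h1 with h1 | ⟨he1, hk1⟩ <;> rcases h2 with h2 | ⟨he2, hk2⟩
    · exact Or.inl (h2.trans h1)
    · exact Or.inl (he2 ▸ h1)
    · exact Or.inl (he1 ▸ h2)
    · exact Or.inr ⟨he1.trans he2, hk1.trans hk2⟩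
  refl p := Or.inr ⟨rfl, le_refl _⟩

lemma P2_antisymm : ∀ p q, P2.rel p q → P2.rel q p → p = q := by
  intro p q h1 h2
  rcases h1 with h1 | ⟨he1, hk1⟩ <;> rcases h2 with h2 | ⟨he2, hk2⟩
  · exact absurd h1 (lt_asymm h2)
  · exact absurd h1 (he2 ▸ lt_irrefl _)
  · exact absurd h2 (he1 ▸ lt_irrefl _)
  · exact qkey_inj (le_antisymm hk1 hk2)

lemma grovesMech_update (a : Fin 2 → unitInterval) (x : unitInterval) :
    grovesMech (Function.update a 0 x) = groves x (a 1) := by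
  simp [grovesMech, Function.update]

/-- Proposition 3: the Groves mechanism suffers from Brexit Anomaly on the domain of all
preference orderings, on the domain of strict ones, and on the domain of non-strict ones
(those admitting a nontrivial indifference). -/
theorem groves_brexit_anomaly :
    QueueBA Set.univ ∧
    QueueBA {P | ∀ x y, P.rel x y → P.rel y x → x = y} ∧
    QueueBA {P | ∃ x y, x ≠ y ∧ P.rel x y ∧ P.rel y x} := by
  have hhalf : (1:ℝ)/2 ∈ Set.Icc (0:ℝ) 1 := by norm_num
  set ℓ : unitInterval := ⟨1/2, hhalf⟩ with hℓ
  have hrl : (1 : unitInterval) ≠ ℓ := by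
    intro h
    have : ((1:unitInterval):ℝ) = ((ℓ:unitInterval):ℝ) := by rw [h]
    norm_num [hℓ] at this
  -- outcome computations
  have hga1 : groves 1 (0:unitInterval) = (0, 0, 1, 0) := by
    simp only [groves, Set.Icc.coe_zero, Set.Icc.coe_one, if_pos one_pos]
  have hgaℓ : groves ℓ (0:unitInterval) = (0, 0, 1, 0) := by
    simp only [groves, hℓ]
    norm_num
  have hgb : ∀ x : unitInterval, groves x (1:unitInterval) = (1, 0, 0, (x:ℝ)) := by
    intro x
    simp only [groves, Set.Icc.coe_one, if_neg (not_lt.mpr x.2.2)]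
  have ha : ∀ x : unitInterval,
      grovesMech (Function.update (fun _ => (0:unitInterval)) 0 x) = groves x 0 :=
    fun x => grovesMech_update _ x
  have hb : ∀ x : unitInterval,
      grovesMech (Function.update (fun _ => (1:unitInterval)) 0 x) = groves x 1 :=
    fun x => grovesMech_update _ x
  refine ⟨?_, ?_, ?_⟩
  · -- full domain, use P1
    refine ⟨0, 1, ℓ, (fun _ => 0), (fun _ => 1), P1, trivial, hrl,
      ⟨1, by decide, by intro h; simpa using congrArg (fun t : unitInterval => (t:ℝ)) h⟩,
      ?_, ?_, ?_⟩
    · rw [ha, ha, hga1, hgaℓ]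
    · constructor
      · rw [ha, ha, hga1, hgaℓ]
        show u1 _ ≤ u1 _
        simp [u1, hℓ]
        norm_num
      · rw [ha, ha, hga1, hgaℓ]
        show ¬ u1 _ ≤ u1 _
        simp [u1, hℓ]
        norm_num
    · intro x
      rw [hb, hb, hgb, hgb]
      show u1 _ ≤ u1 _
      simp [u1]
  · -- strict domain, use P2
    refine ⟨0, 1, ℓ, (fun _ => 0), (fun _ => 1), P2, P2_antisymm, hrl,
      ⟨1, by decide, by intro h; simpa using congrArg (fun t : unitInterval => (t:ℝ)) h⟩,
      ?_, ?_, ?_⟩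
    · rw [ha, ha, hga1, hgaℓ]
    · constructor
      · rw [ha, ha, hga1, hgaℓ]
        left
        simp [u2, hℓ]
      · rw [ha, ha, hga1, hgaℓ]
        intro h
        rcases h with h | ⟨he, _⟩
        · simp [u2, hℓ] at h; norm_num at h
        · simp [u2, hℓ] at he; norm_num at he
    · intro x
      rw [hb, hb, hgb, hgb]
      rcases eq_or_lt_of_le x.2.2 with h | h
      · have hx : x = 1 := by
          ext; exact h
        rw [hx]
        exact P2.refl _
      · left
        simp only [u2, Set.Icc.coe_one]
        norm_num
        linarith
  · -- domain with an indifference, use P1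
    refine ⟨0, 1, ℓ, (fun _ => 0), (fun _ => 1), P1,
      ⟨(0, (0, 0, 0, 0)), (0, (0, 1, 0, 0)), by
        intro h
        have := congrArg (fun p : QT => p.2.2.1) h
        norm_num at this, le_of_eq (by simp [u1]), le_of_eq (by simp [u1])⟩,
      hrl,
      ⟨1, by decide, by intro h; simpa using congrArg (fun t : unitInterval => (t:ℝ)) h⟩,
      ?_, ?_, ?_⟩
    · rw [ha, ha, hga1, hgaℓ]
    · constructor
      · rw [ha, ha, hga1, hgaℓ]
        show u1 _ ≤ u1 _
        simp [u1, hℓ]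
        norm_num
      · rw [ha, ha, hga1, hgaℓ]
        show ¬ u1 _ ≤ u1 _
        simp [u1, hℓ]
        norm_num
    · intro x
      rw [hb, hb, hgb, hgb]
      show u1 _ ≤ u1 _
      simp [u1]
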